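/- Define polynomials ρ_{k,r} ∈ ℂ[ω,β] for k ≥ 0 and r an odd integer by the formal power series expansion Σ_{k≥0} ρ_{k,r} t^k = (1+βt²)^{−3/4}·((1−t√(−β))/(1+t√(−β)))^{ω/(2√(−β))}·(√(1−t√(−β)) + √(1+t√(−β)))·(1+√(1+βt²))^{(r−1)/2}. Then the specialization at β = 0 satisfies ρ_{k,r}|_{β=0} = (−1)^k · 2^{(r+1)/2}/k! · ω^k; in particular ρ_{k,r} ≠ 0 for all k ≥ 0. -/

import Mathlib

/-!
Specialising `β ↦ 0` coefficientwise is a ring map commuting with `d/dt`, and it kills every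
`β`-term of the defining equations. Over the domain `ℂ[ω]⟦t⟧` of characteristic zero, a square
root is fixed by its constant term and a series by its derivative and constant term, so the
factors specialise to `h = 1`, `A = 1`, `Cc = 2`, `D = 2^{(r-1)/2}` and `B = exp(-ωt)`. Hence
`G|_{β=0} = 2^{(r+1)/2} exp(-ωt)`, whose coefficients are all nonzero.
-/

open PowerSeries

/- `ω = X 0`, `β = X 1`. The factors are encoded by their defining equations: `h = √(1+βt²)`,
`A = (1+βt²)^{-3/4}`, `B = ((1-t√-β)/(1+t√-β))^{ω/(2√-β)}`, `Cc = √(1-t√-β) + √(1+t√-β)`,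
`D = (1+h)^{(r-1)/2}`. -/
noncomputable abbrev Stmt7.Pω : PowerSeries (MvPolynomial (Fin 2) ℂ) :=
  PowerSeries.C (MvPolynomial.X 0)

noncomputable abbrev Stmt7.Pβ : PowerSeries (MvPolynomial (Fin 2) ℂ) :=
  PowerSeries.C (MvPolynomial.X 1)

namespace PowerSeries

variable {R S : Type*}

set_option linter.deprecated false in
theorem derivativeFun_eq_derivative [CommSemiring R] (f : R⟦X⟧) :
    f.derivativeFun = d⁄dX R f := rfl

instance [Semiring R] [CharZero R] : CharZero R⟦X⟧ :=
  ⟨fun m n h => by simpa using congrArg constantCoeff h⟩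

theorem map_derivative [CommSemiring R] [CommSemiring S] (φ : R →+* S) (f : R⟦X⟧) :
    map φ (d⁄dX R f) = d⁄dX S (map φ f) := by
  ext n
  simp [coeff_derivative]

theorem derivative_rescale [CommSemiring R] (a : R) (f : R⟦X⟧) :
    d⁄dX R (rescale a f) = C a * rescale a (d⁄dX R f) := by
  ext n
  simp only [coeff_derivative, coeff_rescale, coeff_C_mul, pow_succ]
  ring

theorem eq_C_of_derivative_eq_zero [CommRing R] [IsAddTorsionFree R] {f : R⟦X⟧}
    (hf : d⁄dX R f = 0) : f = C (constantCoeff f) :=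
  derivative.ext (by simp [hf]) (by simp)

theorem eq_of_sq_eq_sq_of_constantCoeff_eq [CommRing R] [IsDomain R] [CharZero R] {f g : R⟦X⟧}
    (hsq : f ^ 2 = g ^ 2) (h0 : constantCoeff f = constantCoeff g) (hg : constantCoeff g ≠ 0) :
    f = g := by
  refine (sq_eq_sq_iff_eq_or_eq_neg.mp hsq).resolve_right fun hneg => hg ?_
  rw [hneg, map_neg] at h0
  exact CharZero.eq_neg_self_iff.mp h0.symm

theorem eq_rescale_exp_of_derivative_eq_C_mul [CommRing R] [Algebra ℚ R] [IsAddTorsionFree R]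
    {f : R⟦X⟧} {a : R} (hd : d⁄dX R f = C a * f) (hc : constantCoeff f = 1) :
    f = rescale a (exp R) := by
  have hinv : f * rescale (-a) (exp R) = 1 := by
    refine derivative.ext ?_ ?_
    · rw [Derivation.leibniz, derivative_rescale, derivative_exp, hd, derivative_one, smul_eq_mul,
        smul_eq_mul, map_neg]
      ring
    · rw [map_mul, hc, one_mul, ← coeff_zero_eq_constantCoeff_apply, coeff_rescale]
      simp
  calc f = f * rescale (-a) (exp R) * rescale a (exp R) := by
        rw [mul_assoc, exp_mul_exp_eq_exp_add, neg_add_cancel, rescale_zero]; simp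
    _ = rescale a (exp R) := by rw [hinv, one_mul]

end PowerSeries

namespace Stmt7

noncomputable def setβZero : MvPolynomial (Fin 2) ℂ →+* MvPolynomial ℕ ℂ :=
  (MvPolynomial.aeval ![MvPolynomial.X 0, 0]).toRingHom

section Specialization

set_option linter.deprecated false

variable {f : PowerSeries (MvPolynomial (Fin 2) ℂ)}

theorem constantCoeff_map_setβZero (g : PowerSeries (MvPolynomial (Fin 2) ℂ)) :
    constantCoeff (map setβZero g) = setβZero (constantCoeff g) := by
  rw [← coeff_zero_eq_constantCoeff_apply, coeff_map, coeff_zero_eq_constantCoeff_apply]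

theorem setβZero_X_zero : setβZero (MvPolynomial.X 0) = MvPolynomial.X 0 := by simp [setβZero]

theorem setβZero_X_one : setβZero (MvPolynomial.X 1) = 0 := by simp [setβZero]

theorem setβZero_C (z : ℂ) : setβZero (MvPolynomial.C z) = MvPolynomial.C z := by
  simp [setβZero, MvPolynomial.algebraMap_eq]

theorem map_setβZero_Pβ : map setβZero Pβ = 0 := by
  rw [Pβ, map_C, setβZero_X_one, map_zero]

theorem map_setβZero_Pω : map setβZero Pω = C (MvPolynomial.X 0) := by
  rw [Pω, map_C, setβZero_X_zero]

theorem map_setβZero_one_add_Pβ_mul : map setβZero (1 + Pβ * X ^ 2) = 1 := by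
  rw [map_add, map_mul, map_one, map_setβZero_Pβ, zero_mul, add_zero]

theorem map_setβZero_eq_one_of_sq_eq (hf2 : f ^ 2 = 1 + Pβ * X ^ 2) (hf0 : constantCoeff f = 1) :
    map setβZero f = 1 := by
  refine eq_of_sq_eq_sq_of_constantCoeff_eq ?_ ?_ (by simp)
  · rw [← map_pow, hf2, map_setβZero_one_add_Pβ_mul, one_pow]
  · rw [constantCoeff_map_setβZero, hf0]; simp

theorem map_setβZero_eq_one_of_derivative_eq (hf0 : constantCoeff f = 1)
    (hf : 2 * (1 + Pβ * X ^ 2) * f.derivativeFun = -3 * (Pβ * X * f)) :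
    map setβZero f = 1 := by
  have hd : 2 * d⁄dX _ (map setβZero f) = 0 := by
    simpa only [map_mul, map_neg, map_ofNat, map_setβZero_one_add_Pβ_mul, map_setβZero_Pβ,
      derivativeFun_eq_derivative, map_derivative, zero_mul, mul_zero, mul_one]
      using congrArg (map setβZero) hf
  rw [eq_C_of_derivative_eq_zero ((mul_eq_zero.mp hd).resolve_left two_ne_zero),
    constantCoeff_map_setβZero, hf0, map_one, map_one]

theorem map_setβZero_eq_rescale_exp (hf0 : constantCoeff f = 1)
    (hf : (1 + Pβ * X ^ 2) * f.derivativeFun = -Pω * f) :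
    map setβZero f = rescale (-MvPolynomial.X 0) (exp _) := by
  refine eq_rescale_exp_of_derivative_eq_C_mul ?_ (by simp [constantCoeff_map_setβZero, hf0])
  have := congrArg (map setβZero) hf
  simp only [map_mul, map_neg, map_setβZero_one_add_Pβ_mul, map_setβZero_Pω,
    derivativeFun_eq_derivative, map_derivative, one_mul] at this
  rwa [map_neg]

theorem map_setβZero_eq_two_of_sq_eq {g : PowerSeries (MvPolynomial (Fin 2) ℂ)}
    (hg : map setβZero g = 1) (hf2 : f ^ 2 = 2 + 2 * g) (hf0 : constantCoeff f = 2) :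
    map setβZero f = 2 := by
  refine eq_of_sq_eq_sq_of_constantCoeff_eq ?_ ?_ (by rw [map_ofNat]; exact two_ne_zero)
  · rw [← map_pow, hf2, map_add, map_mul, map_ofNat, hg]
    norm_num
  · rw [constantCoeff_map_setβZero, hf0, map_ofNat, map_ofNat]

theorem map_setβZero_eq_C_of_derivative_eq {g : PowerSeries (MvPolynomial (Fin 2) ℂ)}
    {a : MvPolynomial (Fin 2) ℂ} {c : ℂ} (hg : map setβZero g = 1)
    (hf0 : constantCoeff f = MvPolynomial.C c)
    (hf : 2 * (g * (1 + g)) * f.derivativeFun = C a * (Pβ * X * f)) :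
    map setβZero f = C (MvPolynomial.C c) := by
  have hd : 2 * (1 * (1 + 1)) * d⁄dX _ (map setβZero f) = 0 := by
    simpa only [map_mul, map_add, map_one, map_ofNat, hg, map_setβZero_Pβ,
      derivativeFun_eq_derivative, map_derivative, zero_mul, mul_zero]
      using congrArg (map setβZero) hf
  rw [eq_C_of_derivative_eq_zero ((mul_eq_zero.mp hd).resolve_left (by norm_num)),
    constantCoeff_map_setβZero, hf0, setβZero_C]

end Specialization

theorem two_mul_two_zpow_sub_one_div_two (r : ℤ) :
    (2 : ℂ) * 2 ^ ((r - 1) / 2) = 2 ^ ((r + 1) / 2) := by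
  rw [show (r + 1) / 2 = (r - 1) / 2 + 1 by omega, zpow_add_one₀ two_ne_zero, mul_comm]

theorem coeff_C_mul_rescale_exp (c : ℂ) (k : ℕ) :
    coeff k (C (MvPolynomial.C c) * rescale (-MvPolynomial.X 0) (exp (MvPolynomial ℕ ℂ)))
      = MvPolynomial.C ((-1) ^ k * c / (k.factorial : ℂ)) * MvPolynomial.X 0 ^ k := by
  rw [coeff_C_mul, coeff_rescale, coeff_exp, MvPolynomial.algebraMap_apply, one_div, map_inv₀,
    map_natCast, div_eq_mul_inv, map_mul, map_mul, map_pow, map_neg, map_one]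
  ring

end Stmt7

open Stmt7 in
theorem stmt7 (r : ℤ)
    (h A B Cc D G : PowerSeries (MvPolynomial (Fin 2) ℂ))
    (hh2 : h ^ 2 = 1 + Pβ * X ^ 2)
    (hh0 : constantCoeff h = 1)
    (hA0 : constantCoeff A = 1)
    (hA : 2 * (1 + Pβ * X ^ 2) * A.derivativeFun = -3 * (Pβ * X * A))
    (hB0 : constantCoeff B = 1)
    (hB : (1 + Pβ * X ^ 2) * B.derivativeFun = -Pω * B)
    (hC2 : Cc ^ 2 = 2 + 2 * h)
    (hC0 : constantCoeff Cc = 2)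
    (hD0 : constantCoeff D = MvPolynomial.C ((2 : ℂ) ^ ((r - 1) / 2)))
    (hD : 2 * (h * (1 + h)) * D.derivativeFun
        = PowerSeries.C (MvPolynomial.C ((r : ℂ) - 1)) * (Pβ * X * D))
    (hG : G = A * B * Cc * D) :
    ∀ k : ℕ,
      MvPolynomial.aeval ![MvPolynomial.X 0, 0] (PowerSeries.coeff k G)
        = MvPolynomial.C ((-1) ^ k * (2 : ℂ) ^ ((r + 1) / 2) / (k.factorial : ℂ))
            * MvPolynomial.X 0 ^ k
      ∧ PowerSeries.coeff k G ≠ 0 := by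
  have hh := map_setβZero_eq_one_of_sq_eq hh2 hh0
  have hG' : map setβZero G = C (MvPolynomial.C ((2 : ℂ) ^ ((r + 1) / 2)))
      * rescale (-MvPolynomial.X 0) (exp _) := by
    rw [hG, map_mul, map_mul, map_mul, map_setβZero_eq_one_of_derivative_eq hA0 hA,
      map_setβZero_eq_rescale_exp hB0 hB, map_setβZero_eq_two_of_sq_eq hh hC2 hC0,
      map_setβZero_eq_C_of_derivative_eq hh hD0 hD, ← two_mul_two_zpow_sub_one_div_two,
      map_mul, map_mul, map_ofNat, map_ofNat]
    ring
  intro k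
  have hk : setβZero (coeff k G)
      = MvPolynomial.C ((-1) ^ k * (2 : ℂ) ^ ((r + 1) / 2) / (k.factorial : ℂ))
        * MvPolynomial.X 0 ^ k := by
    rw [← coeff_map, hG', coeff_C_mul_rescale_exp]
  refine ⟨hk, fun hzero => ?_⟩
  rw [hzero, map_zero, eq_comm] at hk
  refine mul_ne_zero ?_ (pow_ne_zero _ (MvPolynomial.X_ne_zero 0)) hk
  simp [Nat.factorial_ne_zero, zpow_ne_zero _ (two_ne_zero (α := ℂ))]
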